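/- Let A ≠ 0 and B be real constants and let p : (0,∞) → ℝ be twice differentiable with p'(ρ) > 0 for all ρ > 0. Define v(ρ) = (2/A)(√(p'(ρ)) − B). Then the identity ρ · v'(ρ) = (A/2) · v(ρ) + B holds for all ρ > 0 (i.e. the change of variables symmetrizes the Euler system) if and only if there exist constants K₁ > 0 and K such that p(ρ) = K₁/(A+1) · ρ^{A+1} + K when A ≠ −1, or p(ρ) = K₁ · ln ρ + K when A = −1. -/

import Mathlib

/-!
With `s = √p'`, the affine change of variables `v = (2/A)(s - B)` turns `ρ v' = (A/2) v + B` into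
the Euler equation `ρ s' = (A/2) s`, whose solutions on `(0, ∞)` are `s = c ρ^(A/2)`, because
`s ρ^(-A/2)` has zero derivative. Since `p' > 0`, this says `p' = K₁ ρ^A` with `K₁ = c² > 0`, and `p`
is recovered by integrating once: a power of `ρ` unless `A = -1`, a logarithm if `A = -1`.
-/

open Real Set

theorem deriv_eq_of_forall_pos_eq {f g : ℝ → ℝ} (h : ∀ x > 0, f x = g x) {x : ℝ} (hx : 0 < x) :
    deriv f x = deriv g x :=
  EqOn.deriv (fun y hy => h y hy) isOpen_Ioi hx

theorem forall_mul_deriv_affine_iff {A B : ℝ} (hA : A ≠ 0) {s v : ℝ → ℝ}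
    (hv : ∀ x > 0, v x = 2 / A * (s x - B)) :
    (∀ x > 0, x * deriv v x = A / 2 * v x + B) ↔ ∀ x > 0, x * deriv s x = A / 2 * s x := by
  refine forall₂_congr fun x hx => ?_
  have hdv : deriv v x = 2 / A * deriv s x := by
    rw [deriv_eq_of_forall_pos_eq hv hx, deriv_const_mul_field, deriv_sub_const]
  rw [hdv, hv x hx]
  constructor <;> intro h <;> field_simp at h ⊢ <;> linarith

theorem forall_mul_deriv_eq_iff_exists_rpow {s : ℝ → ℝ} {a : ℝ}
    (hs : DifferentiableOn ℝ s (Ioi 0)) :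
    (∀ x > 0, x * deriv s x = a * s x) ↔ ∃ c, ∀ x > 0, s x = c * x ^ a := by
  constructor
  · intro h
    have hderiv : ∀ x > 0, HasDerivAt (fun y => s y * y ^ (-a)) 0 x := by
      intro x hx
      refine (((hs x hx).differentiableAt (Ioi_mem_nhds hx)).hasDerivAt.mul
        (hasDerivAt_rpow_const (Or.inl hx.ne'))).congr_deriv ?_
      rw [rpow_sub_one hx.ne']
      field_simp
      rw [mul_comm (deriv s x), h x hx]
      ring
    obtain ⟨c, hc⟩ := isOpen_Ioi.exists_is_const_of_deriv_eq_zero isPreconnected_Ioi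
      (fun x hx => (hderiv x hx).differentiableAt.differentiableWithinAt)
      (fun x hx => (hderiv x hx).deriv)
    refine ⟨c, fun x hx => ?_⟩
    rw [← hc x hx, mul_assoc, ← rpow_add hx, neg_add_cancel, rpow_zero, mul_one]
  · rintro ⟨c, hc⟩ x hx
    rw [deriv_eq_of_forall_pos_eq hc hx, deriv_const_mul_field,
      (hasDerivAt_rpow_const (Or.inl hx.ne')).deriv, hc x hx, rpow_sub_one hx.ne']
    field_simp

theorem exists_sqrt_eq_mul_rpow_iff {f : ℝ → ℝ} {a : ℝ} (hf : ∀ x > 0, 0 < f x) :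
    (∃ c, ∀ x > 0, √(f x) = c * x ^ (a / 2)) ↔ ∃ K > 0, ∀ x > 0, f x = K * x ^ a := by
  constructor
  · rintro ⟨c, hc⟩
    have hc1 : √(f 1) = c := by simpa using hc 1 one_pos
    refine ⟨c ^ 2, pow_pos (hc1 ▸ sqrt_pos.mpr (hf 1 one_pos)) 2, fun x hx => ?_⟩
    rw [← sq_sqrt (hf x hx).le, hc x hx, mul_pow, sq (x ^ (a / 2)), ← rpow_add hx, add_halves]
  · rintro ⟨K, hK, hfK⟩
    refine ⟨√K, fun x hx => ?_⟩
    rw [hfK x hx, sqrt_mul hK.le, sqrt_eq_rpow (x ^ a), ← rpow_mul hx.le, mul_one_div]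

theorem forall_deriv_eq_iff_exists_add {f F F' : ℝ → ℝ} (hf : DifferentiableOn ℝ f (Ioi 0))
    (hF : ∀ x > 0, HasDerivAt F (F' x) x) :
    (∀ x > 0, deriv f x = F' x) ↔ ∃ K, ∀ x > 0, f x = F x + K := by
  constructor
  · intro h
    exact isOpen_Ioi.exists_eq_add_of_deriv_eq isPreconnected_Ioi hf
      (fun x hx => (hF x hx).differentiableAt.differentiableWithinAt)
      (fun x hx => (h x hx).trans (hF x hx).deriv.symm)
  · rintro ⟨K, hK⟩ x hx
    rw [deriv_eq_of_forall_pos_eq hK hx, deriv_add_const, (hF x hx).deriv]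

theorem forall_deriv_eq_mul_rpow_iff {f : ℝ → ℝ} {K₁ A : ℝ} (hf : DifferentiableOn ℝ f (Ioi 0)) :
    (∀ x > 0, deriv f x = K₁ * x ^ A) ↔ ∃ K,
      (A ≠ -1 ∧ ∀ x > 0, f x = K₁ / (A + 1) * x ^ (A + 1) + K) ∨
      (A = -1 ∧ ∀ x > 0, f x = K₁ * log x + K) := by
  by_cases hA : A = -1
  · subst hA
    have hF : ∀ x > 0, HasDerivAt (fun x => K₁ * log x) (K₁ * x ^ (-1 : ℝ)) x := fun x hx => by
      simpa [rpow_neg_one] using (hasDerivAt_log hx.ne').const_mul K₁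
    simpa using forall_deriv_eq_iff_exists_add hf hF
  · have hA1 : A + 1 ≠ 0 := fun h => hA (eq_neg_of_add_eq_zero_left h)
    have hF : ∀ x > 0, HasDerivAt (fun x => K₁ / (A + 1) * x ^ (A + 1)) (K₁ * x ^ A) x :=
      fun x hx => by
        refine ((hasDerivAt_rpow_const (Or.inl hx.ne')).const_mul (K₁ / (A + 1))).congr_deriv ?_
        rw [add_sub_cancel_right]
        field_simp
    simpa [hA] using forall_deriv_eq_iff_exists_add hf hF

theorem stmt0 (A B : ℝ) (hA : A ≠ 0) (p : ℝ → ℝ)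
    (hp1 : ∀ ρ > (0:ℝ), DifferentiableAt ℝ p ρ)
    (hp2 : ∀ ρ > (0:ℝ), DifferentiableAt ℝ (deriv p) ρ)
    (hp' : ∀ ρ > (0:ℝ), 0 < deriv p ρ)
    (v : ℝ → ℝ) (hv : ∀ ρ > (0:ℝ), v ρ = (2/A) * (Real.sqrt (deriv p ρ) - B)) :
    (∀ ρ > (0:ℝ), ρ * deriv v ρ = (A/2) * v ρ + B) ↔
    (∃ K₁ > (0:ℝ), ∃ K : ℝ,
      (A ≠ -1 ∧ ∀ ρ > (0:ℝ), p ρ = K₁/(A+1) * ρ ^ (A+1) + K) ∨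
      (A = -1 ∧ ∀ ρ > (0:ℝ), p ρ = K₁ * Real.log ρ + K)) := by
  have hs : DifferentiableOn ℝ (fun ρ => √(deriv p ρ)) (Ioi 0) := fun ρ hρ =>
    ((hp2 ρ hρ).sqrt (hp' ρ hρ).ne').differentiableWithinAt
  have hp : DifferentiableOn ℝ p (Ioi 0) := fun ρ hρ => (hp1 ρ hρ).differentiableWithinAt
  calc (∀ ρ > 0, ρ * deriv v ρ = A / 2 * v ρ + B)
      ↔ ∀ ρ > 0, ρ * deriv (fun ρ => √(deriv p ρ)) ρ = A / 2 * √(deriv p ρ) :=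
        forall_mul_deriv_affine_iff hA hv
    _ ↔ ∃ c, ∀ ρ > 0, √(deriv p ρ) = c * ρ ^ (A / 2) :=
        forall_mul_deriv_eq_iff_exists_rpow hs
    _ ↔ ∃ K₁ > 0, ∀ ρ > 0, deriv p ρ = K₁ * ρ ^ A := exists_sqrt_eq_mul_rpow_iff hp'
    _ ↔ _ := exists_congr fun _ => and_congr_right fun _ => forall_deriv_eq_mul_rpow_iff hp
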